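/- If λ_0 = ∫_0^L conj(g) dx differs from λ_k = 2ikπ/L for all nonzero integers k, then for each nonzero k the eigenspace ker(λ_k - Ã*) is one-dimensional, spanned by φ_k(x) = e^{-λ_k x} + (1/(λ_k - λ_0)) ∫_0^L conj(g(y)) e^{-λ_k y} dy, and ker(λ_0 - Ã*) is spanned by the constant function 1. -/

import Mathlib

/-!
An element of `ker (μ - Ã*)` solves the affine ODE `z' = K - μ z` with the constant
`K = ∫ conj g · z`, so on `[0, L]` it is `A e^{-μx} + K/μ` (or `z 0 + K x` when `μ = 0`).
For `μ = λ_k`, `k ≠ 0`, plugging this back into the definition of `K` gives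
`(K/μ)(λ_k - λ₀) = A ∫ conj g e^{-λ_k ·}`, i.e. `z = A φ_k`. For `μ = λ₀`, periodicity
forces `A (e^{-λ₀ L} - 1) = 0` (resp. `K L = 0`), and `e^{-λ₀ L} = 1` would make `λ₀` one of
the `λ_k`, `k ≠ 0`; hence `z` is constant.
-/

open Complex MeasureTheory Set Filter Topology ComplexConjugate

/-- `z ∈ ker (μ - Ã*)`, the domain of `Ã*` being modelled by continuity on `[0, L]`,
differentiability on `(0, L)`, square integrability and `z L = z 0`. -/
def MemAdjointEigenspace (L : ℝ) (g : ℝ → ℂ) (μ : ℂ) (z : ℝ → ℂ) : Prop :=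
  ContinuousOn z (Icc 0 L) ∧ DifferentiableOn ℝ z (Ioo 0 L) ∧
    MemLp z 2 (volume.restrict (Ioc 0 L)) ∧ z L = z 0 ∧
    ∀ x ∈ Ioo (0:ℝ) L, -(deriv z x) + (∫ σ in Ioc (0:ℝ) L, conj (g σ) * z σ) = μ * z x

noncomputable def adjointEigenfunction (L : ℝ) (g : ℝ → ℂ) (μ : ℂ) (x : ℝ) : ℂ :=
  cexp (-μ * x) + (1 / (μ - ∫ σ in Ioc (0:ℝ) L, conj (g σ))) *
    ∫ y in Ioc (0:ℝ) L, conj (g y) * cexp (-μ * y)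

theorem eq_of_hasDerivAt_eq_zero {E : Type*} [NormedAddCommGroup E] [NormedSpace ℝ E]
    [CompleteSpace E] {F : ℝ → E} {a b : ℝ} (hc : ContinuousOn F (Icc a b))
    (hd : ∀ x ∈ Ioo a b, HasDerivAt F 0 x) : ∀ x ∈ Icc a b, F x = F a := by
  intro x hx
  have hFTC := intervalIntegral.integral_eq_sub_of_hasDerivAt_of_le (f' := fun _ => (0 : E))
    hx.1 (hc.mono (Icc_subset_Icc_right hx.2))
    (fun y hy => hd y ⟨hy.1, hy.2.trans_le hx.2⟩) intervalIntegrable_const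
  simpa [sub_eq_zero, eq_comm] using hFTC

theorem hasDerivAt_cexp_mul_ofReal (a : ℂ) (x : ℝ) :
    HasDerivAt (fun t : ℝ => cexp (a * t)) (a * cexp (a * x)) x := by
  simpa [mul_comm] using (((hasDerivAt_id x).ofReal_comp).const_mul a).cexp

theorem ContinuousOn.memLp_restrict_Ioc {E : Type*} [NormedAddCommGroup E] {f : ℝ → E}
    {a b : ℝ} (hf : ContinuousOn f (Icc a b)) (p : ENNReal) :
    MemLp f p (volume.restrict (Ioc a b)) := by
  obtain ⟨C, hC⟩ := isCompact_Icc.exists_bound_of_continuousOn hf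
  refine MemLp.of_bound ((hf.mono Ioc_subset_Icc_self).aestronglyMeasurable measurableSet_Ioc) C ?_
  filter_upwards [ae_restrict_mem measurableSet_Ioc] with x hx using hC x (Ioc_subset_Icc_self hx)

theorem cexp_neg_mul_eq_one_iff {L : ℝ} (hL : L ≠ 0) {μ : ℂ} :
    cexp (-μ * L) = 1 ↔ ∃ n : ℤ, μ = 2 * Real.pi * I * n / L := by
  have hL' : (L : ℂ) ≠ 0 := ofReal_ne_zero.2 hL
  rw [Complex.exp_eq_one_iff]
  constructor
  · rintro ⟨n, hn⟩
    exact ⟨-n, by rw [eq_div_iff hL']; push_cast; linear_combination -hn⟩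
  · rintro ⟨n, rfl⟩
    exact ⟨-n, by field_simp; push_cast; ring⟩

theorem eq_of_deriv_eq_sub_mul {L : ℝ} {z : ℝ → ℂ} {K μ : ℂ} (hμ : μ ≠ 0)
    (hc : ContinuousOn z (Icc 0 L)) (hd : DifferentiableOn ℝ z (Ioo 0 L))
    (hode : ∀ x ∈ Ioo (0:ℝ) L, deriv z x = K - μ * z x) :
    ∀ x ∈ Icc (0:ℝ) L, z x = (z 0 - K / μ) * cexp (-μ * x) + K / μ := by
  have hFc : ContinuousOn (fun x : ℝ => cexp (μ * x) * (z x - K / μ)) (Icc 0 L) :=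
    (Continuous.continuousOn (by fun_prop)).mul (hc.sub continuousOn_const)
  have hFd : ∀ x ∈ Ioo (0:ℝ) L,
      HasDerivAt (fun x : ℝ => cexp (μ * x) * (z x - K / μ)) 0 x := by
    intro x hx
    have hz : HasDerivAt z (deriv z x) x :=
      (hd.differentiableAt (isOpen_Ioo.mem_nhds hx)).hasDerivAt
    refine ((hasDerivAt_cexp_mul_ofReal μ x).mul (hz.sub_const (K / μ))).congr_deriv ?_
    rw [hode x hx]
    field_simp
    ring
  intro x hx
  have hF := eq_of_hasDerivAt_eq_zero hFc hFd x hx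
  simp only [ofReal_zero, mul_zero, Complex.exp_zero, one_mul] at hF
  have hexp : cexp (μ * x) * cexp (-μ * x) = 1 := by rw [← Complex.exp_add]; simp
  linear_combination cexp (-μ * x) * hF - (z x - K / μ) * hexp

theorem eq_of_deriv_eq_const {L : ℝ} {z : ℝ → ℂ} {K : ℂ}
    (hc : ContinuousOn z (Icc 0 L)) (hd : DifferentiableOn ℝ z (Ioo 0 L))
    (hode : ∀ x ∈ Ioo (0:ℝ) L, deriv z x = K) :
    ∀ x ∈ Icc (0:ℝ) L, z x = z 0 + K * x := by
  have hFc : ContinuousOn (fun x : ℝ => z x - K * x) (Icc 0 L) :=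
    hc.sub (Continuous.continuousOn (by fun_prop))
  have hFd : ∀ x ∈ Ioo (0:ℝ) L, HasDerivAt (fun x : ℝ => z x - K * x) 0 x := by
    intro x hx
    have hz : HasDerivAt z (deriv z x) x :=
      (hd.differentiableAt (isOpen_Ioo.mem_nhds hx)).hasDerivAt
    refine (hz.sub (((hasDerivAt_id x).ofReal_comp).const_mul K)).congr_deriv ?_
    simp [hode x hx]
  intro x hx
  have hF := eq_of_hasDerivAt_eq_zero hFc hFd x hx
  simp only [ofReal_zero, mul_zero, sub_zero] at hF
  linear_combination hF

theorem setIntegral_conj_mul_exp_add_const {L : ℝ} {g : ℝ → ℂ}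
    (hg : MemLp g 2 (volume.restrict (Ioc 0 L))) (μ A B : ℂ) :
    ∫ σ in Ioc (0:ℝ) L, conj (g σ) * (A * cexp (-μ * σ) + B) =
      A * (∫ σ in Ioc (0:ℝ) L, conj (g σ) * cexp (-μ * σ)) +
        B * ∫ σ in Ioc (0:ℝ) L, conj (g σ) := by
  have hexp : MemLp (fun σ : ℝ => cexp (-μ * σ)) 2 (volume.restrict (Ioc 0 L)) :=
    (Continuous.continuousOn (by fun_prop)).memLp_restrict_Ioc 2
  have hge : Integrable (fun σ => conj (g σ) * cexp (-μ * σ)) (volume.restrict (Ioc 0 L)) :=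
    hg.star.integrable_mul hexp
  have hg1 : Integrable (fun σ => conj (g σ)) (volume.restrict (Ioc 0 L)) :=
    hg.star.integrable one_le_two
  simp_rw [mul_add, mul_left_comm _ A, mul_comm _ B]
  rw [integral_add (hge.const_mul A) (hg1.const_mul B), integral_const_mul, integral_const_mul]

section AdjointEigenspace

variable {L : ℝ} {g : ℝ → ℂ} {μ : ℂ} {z w : ℝ → ℂ}

namespace MemAdjointEigenspace

theorem of_eqOn (hL : 0 ≤ L) (hw : MemAdjointEigenspace L g μ w) (h : EqOn z w (Icc 0 L)) :
    MemAdjointEigenspace L g μ z := by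
  obtain ⟨hc, hd, hm, hper, hode⟩ := hw
  have hint :
      ∫ σ in Ioc (0:ℝ) L, conj (g σ) * z σ = ∫ σ in Ioc (0:ℝ) L, conj (g σ) * w σ :=
    setIntegral_congr_fun measurableSet_Ioc fun σ hσ => by rw [h (Ioc_subset_Icc_self hσ)]
  refine ⟨hc.congr h, hd.congr fun x hx => h (Ioo_subset_Icc_self hx),
    hm.ae_eq ?_, by rw [h (right_mem_Icc.2 hL), h (left_mem_Icc.2 hL), hper], fun x hx => ?_⟩
  · filter_upwards [ae_restrict_mem measurableSet_Ioc] with x hx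
      using (h (Ioc_subset_Icc_self hx)).symm
  · have hzw : z =ᶠ[𝓝 x] w := eventually_of_mem (isOpen_Ioo.mem_nhds hx)
      fun y hy => h (Ioo_subset_Icc_self hy)
    rw [hzw.deriv_eq, hint, h (Ioo_subset_Icc_self hx), hode x hx]

theorem const (c : ℂ) :
    MemAdjointEigenspace L g (∫ σ in Ioc (0:ℝ) L, conj (g σ)) fun _ => c := by
  refine ⟨continuousOn_const, differentiableOn_const c, memLp_const c, rfl, fun x _ => ?_⟩
  rw [deriv_const, integral_mul_const, neg_zero, zero_add]

theorem mul_adjointEigenfunction (hg : MemLp g 2 (volume.restrict (Ioc 0 L)))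
    (hμL : cexp (-μ * L) = 1) (hμ0 : μ ≠ ∫ σ in Ioc (0:ℝ) L, conj (g σ)) (c : ℂ) :
    MemAdjointEigenspace L g μ fun x => c * adjointEigenfunction L g μ x := by
  have hd : ∀ x : ℝ, HasDerivAt (fun x => c * adjointEigenfunction L g μ x)
      (c * (-μ * cexp (-μ * x))) x := fun x =>
    ((hasDerivAt_cexp_mul_ofReal (-μ) x).add_const _).const_mul c
  have hcont : Continuous fun x => c * adjointEigenfunction L g μ x :=
    continuous_iff_continuousAt.2 fun x => (hd x).continuousAt
  refine ⟨hcont.continuousOn, fun x _ => (hd x).differentiableAt.differentiableWithinAt,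
    hcont.continuousOn.memLp_restrict_Ioc 2, ?_, fun x _ => ?_⟩
  · simp only [adjointEigenfunction, ofReal_zero, mul_zero, Complex.exp_zero, hμL]
  · rw [(hd x).deriv]
    simp only [adjointEigenfunction, mul_add c]
    rw [setIntegral_conj_mul_exp_add_const hg]
    generalize (∫ y in Ioc (0:ℝ) L, conj (g y) * cexp (-μ * y)) = I₀
    generalize (∫ σ in Ioc (0:ℝ) L, conj (g σ)) = lam₀ at hμ0 ⊢
    field_simp [sub_ne_zero.2 hμ0]
    ring

theorem exists_eq_mul_adjointEigenfunction (hg : MemLp g 2 (volume.restrict (Ioc 0 L)))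
    (hμ : μ ≠ 0) (hμ0 : μ ≠ ∫ σ in Ioc (0:ℝ) L, conj (g σ))
    (hz : MemAdjointEigenspace L g μ z) :
    ∃ c : ℂ, ∀ x ∈ Icc (0:ℝ) L, z x = c * adjointEigenfunction L g μ x := by
  obtain ⟨hc, hd, -, -, hode⟩ := hz
  set K := ∫ σ in Ioc (0:ℝ) L, conj (g σ) * z σ
  have hsol := eq_of_deriv_eq_sub_mul hμ hc hd fun x hx => by linear_combination -(hode x hx)
  have hK : K = (z 0 - K / μ) * (∫ σ in Ioc (0:ℝ) L, conj (g σ) * cexp (-μ * σ)) +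
      K / μ * ∫ σ in Ioc (0:ℝ) L, conj (g σ) := by
    rw [← setIntegral_conj_mul_exp_add_const hg]
    exact setIntegral_congr_fun measurableSet_Ioc fun σ hσ => by
      rw [hsol σ (Ioc_subset_Icc_self hσ)]
  refine ⟨z 0 - K / μ, fun x hx => ?_⟩
  rw [hsol x hx, adjointEigenfunction]
  generalize (∫ y in Ioc (0:ℝ) L, conj (g y) * cexp (-μ * y)) = I₀ at hK ⊢
  generalize (∫ σ in Ioc (0:ℝ) L, conj (g σ)) = lam₀ at hK hμ0 ⊢
  have hKμ : K / μ = (z 0 - K / μ) * I₀ / (μ - lam₀) := by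
    rw [eq_div_iff (sub_ne_zero.2 hμ0)]
    linear_combination hK + div_mul_cancel₀ K hμ
  linear_combination hKμ

theorem exists_eq_const (hL : 0 < L)
    (hdisj : ∀ n : ℤ, n ≠ 0 →
      ∫ σ in Ioc (0:ℝ) L, conj (g σ) ≠ 2 * Real.pi * I * n / L)
    (hz : MemAdjointEigenspace L g (∫ σ in Ioc (0:ℝ) L, conj (g σ)) z) :
    ∃ c : ℂ, ∀ x ∈ Icc (0:ℝ) L, z x = c := by
  obtain ⟨hc, hd, -, hper, hode⟩ := hz
  set K := ∫ σ in Ioc (0:ℝ) L, conj (g σ) * z σ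
  set lam₀ := ∫ σ in Ioc (0:ℝ) L, conj (g σ)
  have hLL : L ∈ Icc 0 L := right_mem_Icc.2 hL.le
  rcases eq_or_ne lam₀ 0 with hlam₀ | hlam₀
  · have hsol := eq_of_deriv_eq_const (K := K) hc hd fun x hx => by
      linear_combination -(hode x hx) - z x * hlam₀
    have hK : K * L = 0 := by linear_combination hper - hsol L hLL
    have hK0 : K = 0 := (mul_eq_zero.1 hK).resolve_right (ofReal_ne_zero.2 hL.ne')
    exact ⟨z 0, fun x hx => by rw [hsol x hx, hK0, zero_mul, add_zero]⟩
  · have hsol := eq_of_deriv_eq_sub_mul (K := K) hlam₀ hc hd fun x hx => by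
      linear_combination -(hode x hx)
    have hA : (z 0 - K / lam₀) * (cexp (-lam₀ * L) - 1) = 0 := by
      linear_combination hper - hsol L hLL
    have hexp : cexp (-lam₀ * L) ≠ 1 := by
      rw [Ne, cexp_neg_mul_eq_one_iff hL.ne']
      rintro ⟨n, hn⟩
      rcases eq_or_ne n 0 with rfl | hn0
      · exact hlam₀ (by simpa using hn)
      · exact hdisj n hn0 hn
    refine ⟨K / lam₀, fun x hx => ?_⟩
    rw [hsol x hx, (mul_eq_zero.1 hA).resolve_right (sub_ne_zero.2 hexp), zero_mul, zero_add]

end MemAdjointEigenspace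

theorem memAdjointEigenspace_integral_conj_iff (hL : 0 < L)
    (hdisj : ∀ n : ℤ, n ≠ 0 →
      ∫ σ in Ioc (0:ℝ) L, conj (g σ) ≠ 2 * Real.pi * I * n / L) :
    MemAdjointEigenspace L g (∫ σ in Ioc (0:ℝ) L, conj (g σ)) z ↔
      ∃ c : ℂ, ∀ x ∈ Icc (0:ℝ) L, z x = c :=
  ⟨MemAdjointEigenspace.exists_eq_const hL hdisj,
    fun ⟨c, hc⟩ => (MemAdjointEigenspace.const c).of_eqOn hL.le hc⟩

theorem memAdjointEigenspace_iff (hL : 0 < L)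
    (hg : MemLp g 2 (volume.restrict (Ioc 0 L))) (hμ : μ ≠ 0) (hμL : cexp (-μ * L) = 1)
    (hμ0 : μ ≠ ∫ σ in Ioc (0:ℝ) L, conj (g σ)) :
    MemAdjointEigenspace L g μ z ↔
      ∃ c : ℂ, ∀ x ∈ Icc (0:ℝ) L, z x = c * adjointEigenfunction L g μ x :=
  ⟨MemAdjointEigenspace.exists_eq_mul_adjointEigenfunction hg hμ hμ0,
    fun ⟨c, hc⟩ =>
      (MemAdjointEigenspace.mul_adjointEigenfunction hg hμL hμ0 c).of_eqOn hL.le hc⟩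

end AdjointEigenspace

/-- Under `λ₀ ≠ λ_k` for all `k ≠ 0`, each eigenspace of `Ã*` is one dimensional:
`ker(λ_k - Ã*)` is spanned by `φ_k(x) = e^{-λ_k x} + (1/(λ_k-λ_0)) ∫ conj g e^{-λ_k ·}`
for `k ≠ 0`, and `ker(λ₀ - Ã*)` is spanned by the constant function `1`. -/
theorem stmt5 (L : ℝ) (hL : 0 < L) (g : ℝ → ℂ)
    (hg : MemLp g 2 (volume.restrict (Set.Ioc 0 L)))
    (lam : ℤ → ℂ)
    (hlamk : ∀ k : ℤ, k ≠ 0 → lam k = 2 * Real.pi * Complex.I * k / L)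
    (hlam0 : lam 0 = ∫ x in Set.Ioc (0:ℝ) L, (starRingEnd ℂ) (g x))
    (hdisj : ∀ k : ℤ, k ≠ 0 → lam 0 ≠ lam k)
    (φ : ℤ → ℝ → ℂ)
    (hφ0 : ∀ x, φ 0 x = 1)
    (hφk : ∀ k : ℤ, k ≠ 0 → ∀ x, φ k x =
      Complex.exp (-(lam k) * x) +
        (1 / (lam k - lam 0)) * ∫ y in Set.Ioc (0:ℝ) L,
          (starRingEnd ℂ) (g y) * Complex.exp (-(lam k) * y)) :
    ∀ k : ℤ, ∀ z : ℝ → ℂ,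
      (ContinuousOn z (Icc 0 L) ∧ DifferentiableOn ℝ z (Ioo 0 L) ∧
        MemLp z 2 (volume.restrict (Set.Ioc 0 L)) ∧ z L = z 0 ∧
        (∀ x ∈ Ioo (0:ℝ) L,
          -(deriv z x) + (∫ σ in Set.Ioc (0:ℝ) L, (starRingEnd ℂ) (g σ) * z σ)
            = lam k * z x))
      ↔ ∃ c : ℂ, ∀ x ∈ Icc (0:ℝ) L, z x = c * φ k x := by
  intro k z
  change MemAdjointEigenspace L g (lam k) z ↔ _
  rcases eq_or_ne k 0 with rfl | hk
  · simp only [hφ0, mul_one]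
    rw [hlam0] at hdisj ⊢
    exact memAdjointEigenspace_integral_conj_iff hL fun n hn => (hlamk n hn) ▸ hdisj n hn
  · have hlamk_ne : lam k ≠ 0 := by
      rw [hlamk k hk]
      simp [hk, hL.ne', Real.pi_ne_zero]
    rw [hlam0] at hφk hdisj
    simp only [hφk k hk]
    exact memAdjointEigenspace_iff hL hg hlamk_ne
      ((cexp_neg_mul_eq_one_iff hL.ne').2 ⟨k, hlamk k hk⟩) (hdisj k hk).symm
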